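/- arXiv:1307.7760 — 3 statements merged into one kernel-verified Lean document; each statement's English description precedes it below -/
import Mathlib

section
/- For any two probability measures μ and ν on ℝ^d and every x ∈ ℝ^d, |d^K_μ(x) − d^K_ν(x)| ≤ D_K(μ,ν); in particular, sup_{x ∈ ℝ^d} |d^K_μ(x) − d^K_ν(x)| ≤ D_K(μ,ν). -/
open MeasureTheory

noncomputable def gaussK {d : ℕ} (σ : ℝ) (p x : EuclideanSpace ℝ (Fin d)) : ℝ :=
  σ ^ 2 * Real.exp (-‖p - x‖ ^ 2 / (2 * σ ^ 2))

noncomputable def kde {d : ℕ} (σ : ℝ) (μ : Measure (EuclideanSpace ℝ (Fin d)))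
    (x : EuclideanSpace ℝ (Fin d)) : ℝ :=
  ∫ p, gaussK σ p x ∂μ

noncomputable def kap {d : ℕ} (σ : ℝ) (μ ν : Measure (EuclideanSpace ℝ (Fin d))) : ℝ :=
  ∫ p, ∫ q, gaussK σ p q ∂ν ∂μ

noncomputable def DK {d : ℕ} (σ : ℝ) (μ ν : Measure (EuclideanSpace ℝ (Fin d))) : ℝ :=
  Real.sqrt (kap σ μ μ + kap σ ν ν - 2 * kap σ μ ν)

/-- kernel distance from a measure to a point -/
noncomputable def dKmu {d : ℕ} (σ : ℝ) (μ : Measure (EuclideanSpace ℝ (Fin d)))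
    (x : EuclideanSpace ℝ (Fin d)) : ℝ :=
  DK σ μ (Measure.dirac x)

/-- kernel distance between two points -/
noncomputable def DKpt {d : ℕ} (σ : ℝ) (p q : EuclideanSpace ℝ (Fin d)) : ℝ :=
  DK σ (Measure.dirac p) (Measure.dirac q)

/-- kernel power distance with respect to a finite nonempty point set `P` -/
noncomputable def Kpow {d : ℕ} (σ : ℝ) (P : Finset (EuclideanSpace ℝ (Fin d)))
    (hP : P.Nonempty) (μ : Measure (EuclideanSpace ℝ (Fin d)))
    (x : EuclideanSpace ℝ (Fin d)) : ℝ :=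
  Real.sqrt (P.inf' hP fun p => DKpt σ p x ^ 2 + dKmu σ μ p ^ 2)

/-!
The Gaussian kernel is the L² Gram kernel of translated Gaussians: the product of two Gaussians
centred at `p` and `q` is `exp (-‖p - q‖² / (2σ²))` times a Gaussian centred at their midpoint,
so `gaussK σ p q = ⟪φ p, φ q⟫` in `L²(ℝᵈ)` for a suitably normalised `φ p y ∝ exp (-‖y - p‖² / σ²)`.
By Fubini, `κ(μ, ν) = ⟪Φ μ, Φ ν⟫` for the mean embedding `Φ μ = ∫ φ p dμ(p)`, hence
`D_K(μ, ν) = ‖Φ μ - Φ ν‖` and `d^K_μ(x) = ‖Φ μ - Φ δₓ‖`, and the claim is the reverse triangle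
inequality in `L²`.
-/

open Real
open scoped InnerProductSpace

lemma integrable_exp_neg_mul_sq_norm {E : Type*} [NormedAddCommGroup E] [InnerProductSpace ℝ E]
    [FiniteDimensional ℝ E] [MeasurableSpace E] [BorelSpace E] {b : ℝ} (hb : 0 < b) :
    Integrable (fun v : E => exp (-b * ‖v‖ ^ 2)) :=
  Integrable.of_integral_ne_zero <| by
    rw [GaussianFourier.integral_rexp_neg_mul_sq_norm hb]; positivity

section KernelMeanEmbedding

variable {d : ℕ} {σ : ℝ}

local notation "V" => EuclideanSpace ℝ (Fin d)

-- `(π σ² / 2) ^ (d / 2) = ∫ exp (-2 ‖y‖² / σ²) dy` is what a product of two features integrates to.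
noncomputable def gaussFeatureScale (d : ℕ) (σ : ℝ) : ℝ :=
  √(σ ^ 2 / (π * σ ^ 2 / 2) ^ (d / 2 : ℝ))

noncomputable def gaussFeature (σ : ℝ) (p y : V) : ℝ :=
  gaussFeatureScale d σ * exp (-‖y - p‖ ^ 2 / σ ^ 2)

lemma gaussFeatureScale_sq (d : ℕ) (σ : ℝ) :
    gaussFeatureScale d σ ^ 2 = σ ^ 2 / (π * σ ^ 2 / 2) ^ (d / 2 : ℝ) :=
  sq_sqrt (by positivity)

lemma gaussFeature_nonneg (σ : ℝ) (p y : V) : 0 ≤ gaussFeature σ p y := by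
  unfold gaussFeature gaussFeatureScale; positivity

lemma norm_gaussFeature_le (σ : ℝ) (p y : V) :
    ‖gaussFeature σ p y‖ ≤ gaussFeatureScale d σ := by
  rw [norm_of_nonneg (gaussFeature_nonneg σ p y)]
  refine mul_le_of_le_one_right (sqrt_nonneg _) (exp_le_one_iff.2 ?_)
  rw [neg_div]; exact neg_nonpos.2 (by positivity)

lemma continuous_gaussFeature (σ : ℝ) :
    Continuous fun z : V × V => gaussFeature σ z.1 z.2 := by
  unfold gaussFeature; fun_prop

lemma gaussFeature_mul_gaussFeature (hσ : σ ≠ 0) (p q y : V) :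
    gaussFeature σ p y * gaussFeature σ q y =
      gaussFeatureScale d σ ^ 2 * exp (-‖p - q‖ ^ 2 / (2 * σ ^ 2)) *
        exp (-(2 / σ ^ 2) * ‖y - (2⁻¹ : ℝ) • (p + q)‖ ^ 2) := by
  have hpar := parallelogram_law_with_norm ℝ (y - p) (y - q)
  have hsum : ‖y - p + (y - q)‖ = 2 * ‖y - (2⁻¹ : ℝ) • (p + q)‖ := by
    rw [show y - p + (y - q) = (2 : ℝ) • (y - (2⁻¹ : ℝ) • (p + q)) by rw [smul_sub]; module,
      norm_smul, Real.norm_two]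
  rw [show y - p - (y - q) = -(p - q) by abel, norm_neg, hsum] at hpar
  rw [gaussFeature, gaussFeature, mul_mul_mul_comm, ← sq, ← exp_add, mul_assoc, ← exp_add]
  congr 2
  generalize ‖y - (2⁻¹ : ℝ) • (p + q)‖ = r at hpar ⊢
  field_simp
  linear_combination hpar

lemma gaussK_eq_integral_gaussFeature_mul (hσ : σ ≠ 0) (p q : V) :
    gaussK σ p q = ∫ y, gaussFeature σ p y * gaussFeature σ q y := by
  have hb : 0 < 2 / σ ^ 2 := by positivity
  simp_rw [gaussFeature_mul_gaussFeature hσ p q]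
  rw [integral_const_mul, integral_sub_right_eq_self (fun v => exp (-(2 / σ ^ 2) * ‖v‖ ^ 2)),
    GaussianFourier.integral_rexp_neg_mul_sq_norm hb, finrank_euclideanSpace_fin,
    gaussFeatureScale_sq, gaussK, show π / (2 / σ ^ 2) = π * σ ^ 2 / 2 by field_simp]
  have : (0 : ℝ) < (π * σ ^ 2 / 2) ^ (d / 2 : ℝ) := by positivity
  field_simp

lemma integrable_gaussFeature (hσ : σ ≠ 0) (p : V) : Integrable (gaussFeature σ p) := by
  have h := ((integrable_exp_neg_mul_sq_norm (E := V)
    (b := (σ ^ 2)⁻¹) (by positivity)).comp_sub_right p).const_mul (gaussFeatureScale d σ)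
  refine h.congr (ae_of_all _ fun y => ?_)
  simp only [gaussFeature, neg_mul, div_eq_inv_mul, mul_comm (σ ^ 2)⁻¹]

lemma gaussFeature_eq_gaussFeature_zero (σ : ℝ) (p y : V) :
    gaussFeature σ p y = gaussFeature σ 0 (y - p) := by
  simp [gaussFeature]

lemma integrable_gaussFeature_prod (hσ : σ ≠ 0) (ρ : Measure V)
    [IsFiniteMeasure ρ] :
    Integrable (fun z : V × V => gaussFeature σ z.1 z.2) (ρ.prod volume) := by
  refine (integrable_prod_iff (continuous_gaussFeature σ).aestronglyMeasurable).2
    ⟨ae_of_all _ (integrable_gaussFeature hσ), ?_⟩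
  have htransl (p : V) :
      ∫ y, ‖gaussFeature σ p y‖ = ∫ y, ‖gaussFeature σ (0 : V) y‖ := by
    simp_rw [gaussFeature_eq_gaussFeature_zero σ p]
    exact integral_sub_right_eq_self (fun y => ‖gaussFeature σ (0 : V) y‖) p
  simp only [htransl]
  exact integrable_const _

noncomputable def gaussMean (σ : ℝ) (μ : Measure V) (y : V) : ℝ := ∫ p, gaussFeature σ p y ∂μ

lemma norm_gaussMean_le (σ : ℝ) (μ : Measure V) [IsFiniteMeasure μ] (y : V) :
    ‖gaussMean σ μ y‖ ≤ gaussFeatureScale d σ * μ.real Set.univ :=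
  norm_integral_le_of_norm_le_const (ae_of_all _ fun p => norm_gaussFeature_le σ p y)

lemma integrable_gaussMean (hσ : σ ≠ 0) (μ : Measure V) [IsFiniteMeasure μ] :
    Integrable (gaussMean σ μ) :=
  (integrable_gaussFeature_prod hσ μ).integral_prod_right

lemma memLp_gaussMean (hσ : σ ≠ 0) (μ : Measure V) [IsFiniteMeasure μ] :
    MemLp (gaussMean σ μ) 2 := by
  have h := integrable_gaussMean hσ μ
  refine (memLp_two_iff_integrable_sq h.aestronglyMeasurable).2 ?_
  simpa only [sq] using h.bdd_mul h.aestronglyMeasurable (ae_of_all _ (norm_gaussMean_le σ μ))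

lemma integral_gaussK_eq (hσ : σ ≠ 0) (ν : Measure V) [IsFiniteMeasure ν] (p : V) :
    ∫ q, gaussK σ p q ∂ν = ∫ y, gaussFeature σ p y * gaussMean σ ν y := by
  simp_rw [gaussK_eq_integral_gaussFeature_mul hσ p, gaussMean, ← integral_const_mul]
  refine integral_integral_swap ?_
  exact (integrable_gaussFeature_prod hσ ν).bdd_mul
    (integrable_gaussFeature hσ p).aestronglyMeasurable.comp_snd
    (ae_of_all _ fun z => norm_gaussFeature_le σ p z.2)

lemma kap_eq_integral_gaussMean_mul (hσ : σ ≠ 0) (μ ν : Measure V)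
    [IsFiniteMeasure μ] [IsFiniteMeasure ν] :
    kap σ μ ν = ∫ y, gaussMean σ μ y * gaussMean σ ν y := by
  simp_rw [kap, integral_gaussK_eq hσ ν, gaussMean, ← integral_mul_const]
  refine integral_integral_swap ?_
  exact (integrable_gaussFeature_prod hσ μ).mul_bdd
    (integrable_gaussMean hσ ν).aestronglyMeasurable.comp_snd
    (ae_of_all _ fun z => norm_gaussMean_le σ ν z.2)

noncomputable def gaussEmbedding (hσ : σ ≠ 0) (μ : Measure V) [IsFiniteMeasure μ] :
    Lp ℝ 2 (volume : Measure V) :=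
  (memLp_gaussMean hσ μ).toLp _

lemma kap_eq_inner_gaussEmbedding (hσ : σ ≠ 0) (μ ν : Measure V)
    [IsFiniteMeasure μ] [IsFiniteMeasure ν] :
    kap σ μ ν = ⟪gaussEmbedding hσ μ, gaussEmbedding hσ ν⟫_ℝ := by
  rw [kap_eq_integral_gaussMean_mul hσ, L2.inner_def]
  refine integral_congr_ae ?_
  filter_upwards [(memLp_gaussMean hσ μ).coeFn_toLp, (memLp_gaussMean hσ ν).coeFn_toLp]
    with y hμ hν
  simp [gaussEmbedding, hμ, hν, mul_comm]

lemma DK_eq_norm_sub_gaussEmbedding (hσ : σ ≠ 0) (μ ν : Measure V)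
    [IsFiniteMeasure μ] [IsFiniteMeasure ν] :
    DK σ μ ν = ‖gaussEmbedding hσ μ - gaussEmbedding hσ ν‖ := by
  rw [DK, ← sqrt_sq (norm_nonneg _), norm_sub_sq_real, kap_eq_inner_gaussEmbedding hσ,
    kap_eq_inner_gaussEmbedding hσ, kap_eq_inner_gaussEmbedding hσ, real_inner_self_eq_norm_sq,
    real_inner_self_eq_norm_sq]
  ring_nf

end KernelMeanEmbedding

theorem kernel_distance_stability_general {d : ℕ} (σ : ℝ) (hσ : 0 < σ)
    (μ ν : Measure (EuclideanSpace ℝ (Fin d)))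
    [IsProbabilityMeasure μ] [IsProbabilityMeasure ν] :
    (∀ x : EuclideanSpace ℝ (Fin d), |dKmu σ μ x - dKmu σ ν x| ≤ DK σ μ ν) ∧
    (⨆ x : EuclideanSpace ℝ (Fin d), |dKmu σ μ x - dKmu σ ν x|) ≤ DK σ μ ν := by
  set Φ := gaussEmbedding hσ.ne'
  have stability (x : EuclideanSpace ℝ (Fin d)) : |dKmu σ μ x - dKmu σ ν x| ≤ DK σ μ ν := by
    simp only [dKmu, DK_eq_norm_sub_gaussEmbedding hσ.ne']
    simpa using abs_norm_sub_norm_le (Φ μ - Φ (Measure.dirac x)) (Φ ν - Φ (Measure.dirac x))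
  exact ⟨stability, Real.iSup_le stability (sqrt_nonneg _)⟩

/-- Stability (K4): `|d^K_μ(x) − d^K_ν(x)| ≤ D_K(μ,ν)` for every `x`, and hence the sup over
all `x` is bounded by `D_K(μ,ν)`. -/
theorem kernel_distance_stability {d : ℕ} (hd : 1 ≤ d) (σ : ℝ) (hσ : 0 < σ)
    (μ ν : Measure (EuclideanSpace ℝ (Fin d)))
    [IsProbabilityMeasure μ] [IsProbabilityMeasure ν] :
    (∀ x : EuclideanSpace ℝ (Fin d), |dKmu σ μ x - dKmu σ ν x| ≤ DK σ μ ν) ∧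
    (⨆ x : EuclideanSpace ℝ (Fin d), |dKmu σ μ x - dKmu σ ν x|) ≤ DK σ μ ν :=
  kernel_distance_stability_general σ hσ μ ν
end

section
/- Let μ be a probability measure on ℝ^d and let p₊ ∈ ℝ^d satisfy κ(μ, δ_q) ≤ κ(μ, δ_{p₊}) for all q ∈ ℝ^d (i.e., p₊ maximizes kde_μ over ℝ^d). Then for every x ∈ ℝ^d, D_K(p₊, x) ≤ 2·D_K(μ, δ_x). -/
/-!
The Gaussian kernel is the Gram kernel of a feature map `φ` into `L²(ℝ^d)`: for `φ p` a suitably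
normalised Gaussian centred at `p`, Apollonius's theorem and the Gaussian integral give
`⟪φ p, φ q⟫ = K(p, q)`. Hence `κ(μ, ν) = ⟪m_μ, m_ν⟫` for the mean embeddings `m_μ = ∫ φ dμ`, so
`D_K(μ, ν) = ‖m_μ - m_ν‖` and `kde_μ q = ⟪m_μ, φ q⟫`. All `φ q` have norm `σ`, so a maximiser `p₊`
of `kde_μ` makes `φ p₊` a point of `φ(ℝ^d)` nearest to `m_μ`, and the triangle inequality gives
`‖φ p₊ - φ x‖ ≤ ‖φ p₊ - m_μ‖ + ‖m_μ - φ x‖ ≤ 2 ‖m_μ - φ x‖`.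
-/

open MeasureTheory

open Real
open scoped InnerProductSpace

section Gaussian

variable {V : Type*} [NormedAddCommGroup V] [InnerProductSpace ℝ V] [FiniteDimensional ℝ V]
  [MeasurableSpace V] [BorelSpace V]

theorem integral_exp_neg_mul_dist_sq {b : ℝ} (hb : 0 < b) (c : V) :
    ∫ v, exp (-b * dist v c ^ 2) = (π / b) ^ (Module.finrank ℝ V / 2 : ℝ) := by
  simp_rw [dist_eq_norm]
  rw [integral_sub_right_eq_self (fun v => exp (-b * ‖v‖ ^ 2)) c,
    GaussianFourier.integral_rexp_neg_mul_sq_norm hb]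

theorem integrable_exp_neg_mul_dist_sq {b : ℝ} (hb : 0 < b) (c : V) :
    Integrable fun v => exp (-b * dist v c ^ 2) :=
  .of_integral_ne_zero <| by rw [integral_exp_neg_mul_dist_sq hb]; positivity

theorem integral_exp_neg_mul_dist_sq_mul {b : ℝ} (hb : 0 < b) (p q : V) :
    ∫ u, exp (-(2 * b) * dist u p ^ 2) * exp (-(2 * b) * dist u q ^ 2)
      = (π / (4 * b)) ^ (Module.finrank ℝ V / 2 : ℝ) * exp (-b * dist p q ^ 2) := by
  have apollonius (u : V) : exp (-(2 * b) * dist u p ^ 2) * exp (-(2 * b) * dist u q ^ 2)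
      = exp (-b * dist p q ^ 2) * exp (-(4 * b) * dist u (midpoint ℝ p q) ^ 2) := by
    rw [← exp_add, ← exp_add]
    congr 1
    linear_combination (-(2 * b)) *
      EuclideanGeometry.dist_sq_add_dist_sq_eq_two_mul_dist_midpoint_sq_add_half_dist_sq u p q
  simp_rw [apollonius, integral_const_mul, integral_exp_neg_mul_dist_sq (by positivity : 0 < 4 * b)]
  ring

theorem memLp_two_exp_neg_mul_dist_sq {b : ℝ} (hb : 0 < b) (c : V) :
    MemLp (fun v => exp (-b * dist v c ^ 2)) 2 := by
  refine (memLp_two_iff_integrable_sq (by fun_prop)).2 ?_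
  convert integrable_exp_neg_mul_dist_sq (by positivity : 0 < 2 * b) c using 2 with v
  rw [sq, ← exp_add]
  ring_nf

theorem exists_inner_eq_exp_neg_mul_dist_sq {b : ℝ} (hb : 0 < b) :
    ∃ φ : V → Lp ℝ 2 (volume : Measure V), ∀ p q, ⟪φ p, φ q⟫_ℝ = exp (-b * dist p q ^ 2) := by
  have hb2 : 0 < 2 * b := by positivity
  let g (p : V) : Lp ℝ 2 (volume : Measure V) := (memLp_two_exp_neg_mul_dist_sq hb2 p).toLp _
  set A : ℝ := (π / (4 * b)) ^ (Module.finrank ℝ V / 2 : ℝ)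
  have hA : 0 < A := by positivity
  have hg (p q : V) : ⟪g p, g q⟫_ℝ = A * exp (-b * dist p q ^ 2) := by
    rw [L2.inner_def, ← integral_exp_neg_mul_dist_sq_mul hb]
    refine integral_congr_ae ?_
    filter_upwards [(memLp_two_exp_neg_mul_dist_sq hb2 p).coeFn_toLp,
      (memLp_two_exp_neg_mul_dist_sq hb2 q).coeFn_toLp] with u hp hq
    rw [Real.inner_apply, hp, hq]
  refine ⟨fun p => (√A)⁻¹ • g p, fun p q => ?_⟩
  rw [real_inner_smul_left, real_inner_smul_right, hg, ← mul_assoc, ← mul_inv,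
    mul_self_sqrt hA.le, inv_mul_cancel_left₀ hA.ne']

end Gaussian

section FeatureMap

variable {H : Type*} [NormedAddCommGroup H] [InnerProductSpace ℝ H]

theorem norm_sub_le_two_mul_norm_sub_of_inner_le {a b m : H} (hab : ‖a‖ = ‖b‖)
    (h : ⟪m, b⟫_ℝ ≤ ⟪m, a⟫_ℝ) : ‖a - b‖ ≤ 2 * ‖m - b‖ := by
  have hma : ‖m - a‖ ≤ ‖m - b‖ := by
    refine (pow_le_pow_iff_left₀ (norm_nonneg _) (norm_nonneg _) two_ne_zero).1 ?_
    rw [norm_sub_sq_real, norm_sub_sq_real, hab]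
    linarith
  calc ‖a - b‖ ≤ ‖a - m‖ + ‖m - b‖ := norm_sub_le_norm_sub_add_norm_sub a m b
    _ ≤ 2 * ‖m - b‖ := by rw [norm_sub_rev a m]; linarith

theorem continuous_of_inner_eq {X : Type*} [TopologicalSpace X] {φ : X → H} {k : X → X → ℝ}
    (hk : Continuous (Function.uncurry k)) (hφ : ∀ p q, ⟪φ p, φ q⟫_ℝ = k p q) :
    Continuous φ := by
  have hdist (p q : X) : dist (φ p) (φ q) = √(k p p + k q q - 2 * k p q) := by
    rw [dist_eq_norm, ← sqrt_sq (norm_nonneg _), norm_sub_sq_real, ← real_inner_self_eq_norm_sq,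
      ← real_inner_self_eq_norm_sq, hφ, hφ, hφ]
    ring_nf
  refine continuous_iff_continuous_dist.2 ?_
  simp_rw [hdist]
  have hdiag₁ : Continuous fun x : X × X => k x.1 x.1 :=
    hk.comp (continuous_fst.prodMk continuous_fst)
  have hdiag₂ : Continuous fun x : X × X => k x.2 x.2 :=
    hk.comp (continuous_snd.prodMk continuous_snd)
  exact ((hdiag₁.add hdiag₂).sub (continuous_const.mul hk)).sqrt

variable [CompleteSpace H] {X : Type*} [MeasurableSpace X]

theorem integral_integral_inner {φ : X → H} {μ ν : Measure X} (hμ : Integrable φ μ)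
    (hν : Integrable φ ν) :
    ∫ p, ∫ q, ⟪φ p, φ q⟫_ℝ ∂ν ∂μ = ⟪∫ p, φ p ∂μ, ∫ q, φ q ∂ν⟫_ℝ := by
  calc ∫ p, ∫ q, ⟪φ p, φ q⟫_ℝ ∂ν ∂μ = ∫ p, ⟪∫ q, φ q ∂ν, φ p⟫_ℝ ∂μ := by
        refine integral_congr_ae (ae_of_all _ fun p => ?_)
        exact (integral_inner hν (φ p)).trans (real_inner_comm _ _)
    _ = _ := (integral_inner hμ _).trans (real_inner_comm _ _)

end FeatureMap

section GaussianKernel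

variable {d : ℕ} {σ : ℝ}

theorem continuous_gaussK (σ : ℝ) :
    Continuous (Function.uncurry (gaussK (d := d) σ)) := by
  unfold gaussK Function.uncurry
  fun_prop

theorem exists_continuous_gaussK_eq_inner (hσ : 0 < σ) :
    ∃ φ : EuclideanSpace ℝ (Fin d) → Lp ℝ 2 (volume : Measure (EuclideanSpace ℝ (Fin d))),
      Continuous φ ∧ ∀ p q, gaussK σ p q = ⟪φ p, φ q⟫_ℝ := by
  obtain ⟨φ, hφ⟩ := exists_inner_eq_exp_neg_mul_dist_sq (V := EuclideanSpace ℝ (Fin d))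
    (by positivity : 0 < (2 * σ ^ 2)⁻¹)
  have hK (p q : EuclideanSpace ℝ (Fin d)) : gaussK σ p q = ⟪σ • φ p, σ • φ q⟫_ℝ := by
    rw [real_inner_smul_left, real_inner_smul_right, hφ, gaussK, dist_eq_norm]
    ring_nf
  exact ⟨_, continuous_of_inner_eq (continuous_gaussK σ) fun p q => (hK p q).symm, hK⟩

variable {H : Type*} [NormedAddCommGroup H] [InnerProductSpace ℝ H]
  {φ : EuclideanSpace ℝ (Fin d) → H}

theorem norm_eq_abs_of_gaussK_eq_inner (hK : ∀ p q, gaussK σ p q = ⟪φ p, φ q⟫_ℝ)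
    (p : EuclideanSpace ℝ (Fin d)) : ‖φ p‖ = |σ| := by
  rw [← abs_norm, ← sq_eq_sq_iff_abs_eq_abs, ← real_inner_self_eq_norm_sq, ← hK]
  simp [gaussK]

theorem integrable_of_gaussK_eq_inner (hφ : Continuous φ)
    (hK : ∀ p q, gaussK σ p q = ⟪φ p, φ q⟫_ℝ) (μ : Measure (EuclideanSpace ℝ (Fin d)))
    [IsFiniteMeasure μ] : Integrable φ μ :=
  .of_bound hφ.aestronglyMeasurable |σ| <| ae_of_all _ fun p =>
    (norm_eq_abs_of_gaussK_eq_inner hK p).le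

theorem kap_eq_inner_integral [CompleteSpace H] (hφ : Continuous φ)
    (hK : ∀ p q, gaussK σ p q = ⟪φ p, φ q⟫_ℝ)
    (μ ν : Measure (EuclideanSpace ℝ (Fin d))) [IsFiniteMeasure μ] [IsFiniteMeasure ν] :
    kap σ μ ν = ⟪∫ p, φ p ∂μ, ∫ q, φ q ∂ν⟫_ℝ := by
  simp_rw [kap, hK]
  exact integral_integral_inner (integrable_of_gaussK_eq_inner hφ hK μ)
    (integrable_of_gaussK_eq_inner hφ hK ν)

theorem DK_eq_norm_sub_integral [CompleteSpace H] (hφ : Continuous φ)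
    (hK : ∀ p q, gaussK σ p q = ⟪φ p, φ q⟫_ℝ)
    (μ ν : Measure (EuclideanSpace ℝ (Fin d))) [IsFiniteMeasure μ] [IsFiniteMeasure ν] :
    DK σ μ ν = ‖∫ p, φ p ∂μ - ∫ q, φ q ∂ν‖ := by
  rw [DK, kap_eq_inner_integral hφ hK, kap_eq_inner_integral hφ hK, kap_eq_inner_integral hφ hK,
    real_inner_self_eq_norm_sq, real_inner_self_eq_norm_sq]
  conv_rhs => rw [← sqrt_sq (norm_nonneg _), norm_sub_sq_real]
  ring_nf

end GaussianKernel

theorem max_point_kernel_distance_bound_general {d : ℕ} (σ : ℝ) (hσ : 0 < σ)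
    (μ : Measure (EuclideanSpace ℝ (Fin d))) [IsProbabilityMeasure μ]
    (pPlus : EuclideanSpace ℝ (Fin d))
    (hmax : ∀ q : EuclideanSpace ℝ (Fin d),
      kap σ μ (Measure.dirac q) ≤ kap σ μ (Measure.dirac pPlus)) :
    ∀ x : EuclideanSpace ℝ (Fin d),
      DKpt σ pPlus x ≤ 2 * DK σ μ (Measure.dirac x) := by
  obtain ⟨φ, hφ, hK⟩ := exists_continuous_gaussK_eq_inner (d := d) hσ
  have mean_dirac (x : EuclideanSpace ℝ (Fin d)) : ∫ q, φ q ∂(Measure.dirac x) = φ x :=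
    integral_dirac φ x
  intro x
  rw [DKpt, DK_eq_norm_sub_integral hφ hK, DK_eq_norm_sub_integral hφ hK, mean_dirac, mean_dirac]
  refine norm_sub_le_two_mul_norm_sub_of_inner_le ?_ ?_
  · rw [norm_eq_abs_of_gaussK_eq_inner hK, norm_eq_abs_of_gaussK_eq_inner hK]
  · simpa only [kap_eq_inner_integral hφ hK, mean_dirac] using hmax x

/-- If `p₊` maximizes `kde_μ` (equivalently `κ(μ,δ_·)`) over `ℝ^d`,
then `D_K(p₊, x) ≤ 2·D_K(μ, δ_x)` for every `x`. -/
theorem max_point_kernel_distance_bound {d : ℕ} (hd : 1 ≤ d) (σ : ℝ) (hσ : 0 < σ)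
    (μ : Measure (EuclideanSpace ℝ (Fin d))) [IsProbabilityMeasure μ]
    (pPlus : EuclideanSpace ℝ (Fin d))
    (hmax : ∀ q : EuclideanSpace ℝ (Fin d),
      kap σ μ (Measure.dirac q) ≤ kap σ μ (Measure.dirac pPlus)) :
    ∀ x : EuclideanSpace ℝ (Fin d),
      DKpt σ pPlus x ≤ 2 * DK σ μ (Measure.dirac x) :=
  max_point_kernel_distance_bound_general σ hσ μ pPlus hmax
end

section
/- Let μ be a probability measure on ℝ^d with finite second moment and let x ∈ ℝ^d. Then d^K_μ(x) = D_K(μ, δ_x) ≤ √(∫ ‖p − x‖² dμ(p)) = W₂(μ, δ_x), and equality holds if and only if μ is the Dirac measure δ_x. -/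
open MeasureTheory

/-!
Since `kde_μ(x) = κ(μ, δ_x)` and `K ≤ σ²`, we get `κ(μ, μ) ≤ σ²` and hence
`d^K_μ(x)² ≤ ∫ (2σ² - 2K(p, x)) dμ(p)`. Pointwise, `1 - e^{-s} ≤ s` with
`s = ‖p - x‖² / 2σ²` gives `2σ² - 2K(p, x) ≤ ‖p - x‖²`, strictly unless `p = x`;
so equality forces `μ{x}ᶜ = 0`.
-/

open Real

lemma measure_compl_singleton_ne_zero_of_ne_dirac {α : Type*} [MeasurableSpace α]
    [MeasurableSingletonClass α] {μ : Measure α} [IsProbabilityMeasure μ] {x : α}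
    (hμ : μ ≠ Measure.dirac x) : μ {x}ᶜ ≠ 0 := by
  contrapose! hμ
  have hae : (id : α → α) =ᵐ[μ] fun _ ↦ x := measure_eq_zero_iff_ae_notMem.mp hμ |>.mono
    fun p hp ↦ by simpa using hp
  simpa using (ProbabilityTheory.hasLaw_dirac_of_ae_eq hae).map_eq

lemma integrable_norm_sub_sq {E : Type*} [NormedAddCommGroup E] [MeasurableSpace E]
    [BorelSpace E] [SecondCountableTopology E] {μ : Measure E} [IsFiniteMeasure μ]
    (h : Integrable (fun p ↦ ‖p‖ ^ 2) μ) (x : E) :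
    Integrable (fun p ↦ ‖p - x‖ ^ 2) μ := by
  have hid : MemLp id 2 μ := (memLp_two_iff_integrable_sq_norm aestronglyMeasurable_id).mpr h
  exact (memLp_two_iff_integrable_sq_norm (by fun_prop)).mp (hid.sub (memLp_const x))

lemma integral_lt_integral_of_ne_dirac {α : Type*} [MeasurableSpace α]
    [MeasurableSingletonClass α] {μ : Measure α} [IsProbabilityMeasure μ] {x : α}
    {f g : α → ℝ} (hf : Integrable f μ) (hg : Integrable g μ) (hfg : f ≤ g)
    (hlt : ∀ p ≠ x, f p < g p) (hμ : μ ≠ Measure.dirac x) :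
    ∫ p, f p ∂μ < ∫ p, g p ∂μ := by
  have hsupp : {x}ᶜ ⊆ Function.support (g - f) := fun p hp ↦ (sub_pos.mpr (hlt p hp)).ne'
  have hpos : 0 < ∫ p, (g - f) p ∂μ := by
    rw [integral_pos_iff_support_of_nonneg (sub_nonneg.mpr hfg) (hg.sub hf)]
    exact (measure_compl_singleton_ne_zero_of_ne_dirac hμ).bot_lt.trans_le
      (measure_mono hsupp)
  rw [Pi.sub_def, integral_sub hg hf] at hpos
  linarith

lemma sub_mul_exp_neg_div_lt {c t : ℝ} (hc : 0 ≤ c) (ht : 0 < t) :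
    c - c * exp (-t / c) < t := by
  rcases hc.eq_or_lt with rfl | hc
  · simpa using ht
  calc c - c * exp (-t / c) < c - c * (-t / c + 1) := by
        gcongr; exact add_one_lt_exp (by rw [neg_div, neg_ne_zero]; positivity)
    _ = t := by field_simp; ring

lemma sub_mul_exp_neg_div_le {c t : ℝ} (hc : 0 ≤ c) (ht : 0 ≤ t) :
    c - c * exp (-t / c) ≤ t := by
  rcases ht.eq_or_lt with rfl | ht
  · simp
  · exact (sub_mul_exp_neg_div_lt hc ht).le

section GaussianKernel

variable {d : ℕ} (σ : ℝ)

lemma gaussK_nonneg (p q : EuclideanSpace ℝ (Fin d)) : 0 ≤ gaussK σ p q := by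
  unfold gaussK; positivity

lemma gaussK_le (p q : EuclideanSpace ℝ (Fin d)) : gaussK σ p q ≤ σ ^ 2 := by
  unfold gaussK
  refine mul_le_of_le_one_right (by positivity) (exp_le_one_iff.mpr ?_)
  exact div_nonpos_of_nonpos_of_nonneg (neg_nonpos.mpr (sq_nonneg _)) (by positivity)

lemma gaussK_comm (p q : EuclideanSpace ℝ (Fin d)) : gaussK σ p q = gaussK σ q p := by
  simp only [gaussK, norm_sub_rev]

@[simp]
lemma gaussK_self (p : EuclideanSpace ℝ (Fin d)) : gaussK σ p p = σ ^ 2 := by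
  simp [gaussK]

lemma norm_gaussK_le (p q : EuclideanSpace ℝ (Fin d)) : ‖gaussK σ p q‖ ≤ σ ^ 2 := by
  rw [Real.norm_of_nonneg (gaussK_nonneg σ p q)]; exact gaussK_le σ p q

lemma two_mul_sq_sub_two_mul_gaussK_le (p x : EuclideanSpace ℝ (Fin d)) :
    2 * σ ^ 2 - 2 * gaussK σ p x ≤ ‖p - x‖ ^ 2 := by
  have := sub_mul_exp_neg_div_le (c := 2 * σ ^ 2) (t := ‖p - x‖ ^ 2) (by positivity)
    (by positivity)
  unfold gaussK; linarith

lemma two_mul_sq_sub_two_mul_gaussK_lt {p x : EuclideanSpace ℝ (Fin d)} (h : p ≠ x) :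
    2 * σ ^ 2 - 2 * gaussK σ p x < ‖p - x‖ ^ 2 := by
  have := sub_mul_exp_neg_div_lt (c := 2 * σ ^ 2) (t := ‖p - x‖ ^ 2) (by positivity)
    (pow_pos (norm_pos_iff.mpr (sub_ne_zero.mpr h)) 2)
  unfold gaussK; linarith

variable (μ ν : Measure (EuclideanSpace ℝ (Fin d))) (x : EuclideanSpace ℝ (Fin d))

lemma integrable_gaussK_left [IsFiniteMeasure μ] : Integrable (fun p ↦ gaussK σ p x) μ :=
  .of_bound (by unfold gaussK; fun_prop) (σ ^ 2) (.of_forall fun p ↦ norm_gaussK_le σ p x)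

lemma norm_kde_le [IsProbabilityMeasure μ] : ‖kde σ μ x‖ ≤ σ ^ 2 := by
  simpa [kde] using
    norm_integral_le_of_norm_le_const (μ := μ) (.of_forall fun p ↦ norm_gaussK_le σ p x)

lemma kap_eq_integral_kde : kap σ μ ν = ∫ p, kde σ ν p ∂μ := by
  simp only [kap, kde, gaussK_comm σ _ (_ : EuclideanSpace ℝ (Fin d))]

lemma kap_le [IsProbabilityMeasure μ] [IsProbabilityMeasure ν] : kap σ μ ν ≤ σ ^ 2 := by
  rw [kap_eq_integral_kde]
  exact (Real.le_norm_self _).trans <| by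
    simpa using
      norm_integral_le_of_norm_le_const (μ := μ) (.of_forall fun p ↦ norm_kde_le σ ν p)

lemma kde_le [IsProbabilityMeasure μ] : kde σ μ x ≤ σ ^ 2 :=
  (Real.le_norm_self _).trans (norm_kde_le σ μ x)

lemma kap_dirac_right : kap σ μ (Measure.dirac x) = kde σ μ x := by
  simp [kap, kde]

lemma kap_dirac_self : kap σ (Measure.dirac x) (Measure.dirac x) = σ ^ 2 := by
  simp [kap]

lemma dKmu_eq : dKmu σ μ x = √(kap σ μ μ + σ ^ 2 - 2 * kde σ μ x) := by
  rw [dKmu, DK, kap_dirac_self, kap_dirac_right]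

@[simp]
lemma dKmu_dirac_self : dKmu σ (Measure.dirac x) x = 0 := by
  rw [dKmu_eq, kap_dirac_self, kde, integral_dirac, gaussK_self]
  ring_nf
  exact sqrt_zero

lemma integral_two_mul_sq_sub_two_mul_gaussK [IsProbabilityMeasure μ] :
    ∫ p, (2 * σ ^ 2 - 2 * gaussK σ p x) ∂μ = 2 * σ ^ 2 - 2 * kde σ μ x := by
  rw [integral_sub (integrable_const _) ((integrable_gaussK_left σ μ x).const_mul 2),
    integral_const_mul 2 (gaussK σ · x)]
  simp [kde]

lemma dKmu_le_sqrt_two_mul_sub_kde [IsProbabilityMeasure μ] :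
    dKmu σ μ x ≤ √(2 * σ ^ 2 - 2 * kde σ μ x) := by
  rw [dKmu_eq]
  gcongr
  linarith [kap_le σ μ μ]

variable {μ}

lemma two_mul_sub_kde_le_integral [IsProbabilityMeasure μ]
    (h : Integrable (fun p ↦ ‖p - x‖ ^ 2) μ) :
    2 * σ ^ 2 - 2 * kde σ μ x ≤ ∫ p, ‖p - x‖ ^ 2 ∂μ := by
  rw [← integral_two_mul_sq_sub_two_mul_gaussK]
  exact integral_mono
    ((integrable_const _).sub ((integrable_gaussK_left σ μ x).const_mul 2)) h
    (two_mul_sq_sub_two_mul_gaussK_le σ · x)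

lemma two_mul_sub_kde_lt_integral_of_ne_dirac [IsProbabilityMeasure μ]
    (h : Integrable (fun p ↦ ‖p - x‖ ^ 2) μ) (hμ : μ ≠ Measure.dirac x) :
    2 * σ ^ 2 - 2 * kde σ μ x < ∫ p, ‖p - x‖ ^ 2 ∂μ := by
  rw [← integral_two_mul_sq_sub_two_mul_gaussK]
  exact integral_lt_integral_of_ne_dirac
    ((integrable_const _).sub ((integrable_gaussK_left σ μ x).const_mul 2)) h
    (two_mul_sq_sub_two_mul_gaussK_le σ · x)
    (fun p hp ↦ two_mul_sq_sub_two_mul_gaussK_lt σ hp) hμ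

lemma dKmu_le_sqrt_integral [IsProbabilityMeasure μ]
    (h : Integrable (fun p ↦ ‖p - x‖ ^ 2) μ) :
    dKmu σ μ x ≤ √(∫ p, ‖p - x‖ ^ 2 ∂μ) :=
  (dKmu_le_sqrt_two_mul_sub_kde σ μ x).trans
    (sqrt_le_sqrt (two_mul_sub_kde_le_integral σ x h))

lemma dKmu_lt_sqrt_integral_of_ne_dirac [IsProbabilityMeasure μ]
    (h : Integrable (fun p ↦ ‖p - x‖ ^ 2) μ) (hμ : μ ≠ Measure.dirac x) :
    dKmu σ μ x < √(∫ p, ‖p - x‖ ^ 2 ∂μ) :=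
  (dKmu_le_sqrt_two_mul_sub_kde σ μ x).trans_lt <|
    sqrt_lt_sqrt (by linarith [kde_le σ μ x]) (two_mul_sub_kde_lt_integral_of_ne_dirac σ x h hμ)

end GaussianKernel

theorem kernel_distance_le_W2_dirac_general {d : ℕ} (σ : ℝ)
    (μ : Measure (EuclideanSpace ℝ (Fin d))) [IsProbabilityMeasure μ]
    (hmom : Integrable (fun p : EuclideanSpace ℝ (Fin d) => ‖p‖ ^ 2) μ)
    (x : EuclideanSpace ℝ (Fin d)) :
    dKmu σ μ x ≤ Real.sqrt (∫ p, ‖p - x‖ ^ 2 ∂μ) ∧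
    (dKmu σ μ x = Real.sqrt (∫ p, ‖p - x‖ ^ 2 ∂μ) ↔ μ = Measure.dirac x) := by
  have h := integrable_norm_sub_sq hmom x
  refine ⟨dKmu_le_sqrt_integral σ x h, fun heq ↦ ?_, ?_⟩
  · by_contra hμ
    exact (dKmu_lt_sqrt_integral_of_ne_dirac σ x h hμ).ne heq
  · rintro rfl
    simp

/-- For a probability measure `μ` with finite second moment,
`d^K_μ(x) ≤ √(∫ ‖p − x‖² dμ(p)) = W₂(μ, δ_x)`, with equality iff `μ = δ_x`. -/
theorem kernel_distance_le_W2_dirac {d : ℕ} (hd : 1 ≤ d) (σ : ℝ) (hσ : 0 < σ)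
    (μ : Measure (EuclideanSpace ℝ (Fin d))) [IsProbabilityMeasure μ]
    (hmom : Integrable (fun p : EuclideanSpace ℝ (Fin d) => ‖p‖ ^ 2) μ)
    (x : EuclideanSpace ℝ (Fin d)) :
    dKmu σ μ x ≤ Real.sqrt (∫ p, ‖p - x‖ ^ 2 ∂μ) ∧
    (dKmu σ μ x = Real.sqrt (∫ p, ‖p - x‖ ^ 2 ∂μ) ↔ μ = Measure.dirac x) :=
  kernel_distance_le_W2_dirac_general σ μ hmom x
end
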